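/- The root x₀ of the ML equation f(x) = 0 satisfies x₀ ≥ exp(ln(1 + P/(A·2^K))·S/P) − 1, where S := ∑_{i=L}^{K} b_i and P := ∑_{i=L}^{K} b_i·2^{K−i}. -/

import Mathlib

/-! With `t = log (1 + x₀)` we have `(1 + x₀) ^ 2 ^ j = exp (t * 2 ^ j)`, so the root equation says
that the `b`-weighted sum of `g (t * 2 ^ j)`, where `g y = y / (exp y - 1)`, equals `t * A * 2 ^ K`.
The function `g` is convex on `(0, ∞)`: its second derivative has the sign of
`y * (exp y + 1) - 2 * (exp y - 1) ≥ 0`. Jensen's inequality at the weighted mean `t * P / S` gives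
`S * g (t * P / S) ≤ t * A * 2 ^ K`, i.e. `P ≤ A * 2 ^ K * (exp (t * P / S) - 1)`, which
rearranges to the bound. -/

open Real Finset

lemma exp_sub_one_le_mul_exp (y : ℝ) : exp y - 1 ≤ y * exp y := by
  have h := mul_le_mul_of_nonneg_left (by linarith [add_one_le_exp (-y)] : 1 - y ≤ exp (-y))
    (exp_pos y).le
  rw [← exp_add, add_neg_cancel, exp_zero] at h
  linarith

lemma two_mul_exp_sub_one_le {y : ℝ} (hy : 0 ≤ y) : 2 * (exp y - 1) ≤ y * (exp y + 1) := by
  have hmono : Monotone fun y ↦ y * (exp y + 1) - 2 * (exp y - 1) :=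
    monotone_of_hasDerivAt_nonneg
      (fun y ↦ (((hasDerivAt_id' y).fun_mul ((hasDerivAt_exp y).add_const 1)).fun_sub
        (((hasDerivAt_exp y).sub_const 1).const_mul 2)).congr_deriv (by ring))
      (fun y ↦ sub_nonneg.2 (exp_sub_one_le_mul_exp y))
  simpa using hmono hy

lemma convexOn_div_exp_sub_one : ConvexOn ℝ (Set.Ioi 0) fun y ↦ y / (exp y - 1) := by
  have hne : ∀ y ∈ Set.Ioi (0 : ℝ), exp y - 1 ≠ 0 := fun y hy ↦
    (sub_pos.2 (one_lt_exp_iff.2 hy)).ne'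
  refine convexOn_of_hasDerivWithinAt2_nonneg (convex_Ioi 0)
    (f' := fun y ↦ (exp y - 1 - y * exp y) / (exp y - 1) ^ 2)
    (f'' := fun y ↦ exp y * (y * (exp y + 1) - 2 * (exp y - 1)) / (exp y - 1) ^ 3)
    (continuousOn_id.div (by fun_prop) hne) (fun y hy ↦ ?_) (fun y hy ↦ ?_) (fun y hy ↦ ?_)
    <;> simp only [interior_Ioi] at hy ⊢
  · exact ((hasDerivAt_id' y).fun_div ((hasDerivAt_exp y).sub_const 1) (hne y hy)).congr_deriv
      (by ring) |>.hasDerivWithinAt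
  · have hd := hne y hy
    refine ((((hasDerivAt_exp y).sub_const 1).fun_sub
      ((hasDerivAt_id' y).fun_mul (hasDerivAt_exp y))).fun_div
      (((hasDerivAt_exp y).sub_const 1).fun_pow 2) (pow_ne_zero 2 hd)).congr_deriv ?_
      |>.hasDerivWithinAt
    field_simp
    ring
  · exact div_nonneg (mul_nonneg (exp_pos y).le (sub_nonneg.2 (two_mul_exp_sub_one_le hy.le)))
      (pow_nonneg (sub_pos.2 (one_lt_exp_iff.2 hy)).le 3)

lemma log_one_add_div_le_of_le_mul_exp_sub_one {P B u : ℝ} (hP : 0 < P) (hu : 0 < u)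
    (h : P ≤ B * (exp u - 1)) : log (1 + P / B) ≤ u := by
  have hB : 0 < B := pos_of_mul_pos_left (hP.trans_le h) (sub_pos.2 (one_lt_exp_iff.2 hu)).le
  rw [log_le_iff_le_exp (by positivity), ← le_sub_iff_add_le', div_le_iff₀' hB]
  exact h

theorem log_one_add_div_mul_div_le_log_one_add {ι : Type*} {s : Finset ι} {w : ι → ℝ}
    {m : ι → ℕ} (hw : ∀ i ∈ s, 0 ≤ w i) (hS : 0 < ∑ i ∈ s, w i) (hm : ∀ i ∈ s, 0 < m i)
    {x B : ℝ} (hx : 0 < x) (hroot : ∑ i ∈ s, w i * m i * x / ((1 + x) ^ m i - 1) = B * x) :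
    log (1 + (∑ i ∈ s, w i * m i) / B) * ((∑ i ∈ s, w i) / ∑ i ∈ s, w i * m i) ≤
      log (1 + x) := by
  set S := ∑ i ∈ s, w i
  set P := ∑ i ∈ s, w i * m i
  set t := log (1 + x)
  have ht : 0 < t := log_pos (by linarith)
  have hSP : S ≤ P := sum_le_sum fun i hi ↦
    le_mul_of_one_le_right (hw i hi) (by exact_mod_cast hm i hi)
  have hP : 0 < P := hS.trans_le hSP
  have hsum : ∑ i ∈ s, w i * (t * m i / (exp (t * m i) - 1)) = t * B := by
    have hterm : ∀ i ∈ s, w i * (t * m i / (exp (t * m i) - 1)) =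
        t / x * (w i * m i * x / ((1 + x) ^ m i - 1)) := fun i _ ↦ by
      rw [exp_mul, exp_log (by linarith), rpow_natCast]
      field_simp
    rw [sum_congr rfl hterm, ← mul_sum, hroot]
    field_simp
  have hmean : ∑ i ∈ s, w i * (t * m i) = t * P := by
    rw [mul_sum]; exact sum_congr rfl fun i _ ↦ by ring
  have hjensen : t * P / S / (exp (t * P / S) - 1) ≤ t * B / S := by
    have := convexOn_div_exp_sub_one.map_centerMass_le hw hS (p := fun i ↦ t * m i)
      fun i hi ↦ Set.mem_Ioi.2 (by have := hm i hi; positivity)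
    simpa only [centerMass, smul_eq_mul, Function.comp_apply, hsum, hmean, inv_mul_eq_div]
      using this
  have hu : 0 < t * P / S := by positivity
  have hkey : P ≤ B * (exp (t * P / S) - 1) := by
    rw [div_le_iff₀ (sub_pos.2 (one_lt_exp_iff.2 hu)), div_mul_eq_mul_div,
      div_le_div_iff_of_pos_right hS, mul_assoc] at hjensen
    exact le_of_mul_le_mul_left hjensen ht
  have hlog := log_one_add_div_le_of_le_mul_exp_sub_one hP hu hkey
  calc log (1 + P / B) * (S / P) ≤ t * P / S * (S / P) := by gcongr
    _ = t := by field_simp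

lemma sum_Icc_eq_sum_range_sub {M : Type*} [AddCommMonoid M] {L K : ℤ} (h : L ≤ K)
    (f : ℤ → M) : ∑ i ∈ Icc L K, f i = ∑ j ∈ range ((K - L).toNat + 1), f (K - j) := by
  refine sum_nbij' (fun i ↦ (K - i).toNat) (fun j ↦ K - j) ?_ ?_ ?_ ?_ ?_ <;>
    intros <;> simp_all <;> omega

theorem ml_root_lower_bound_general (A : ℝ) (L K : ℤ)
    (b : ℤ → ℝ) (hb : ∀ i, 0 ≤ b i)
    (hne : ∃ i ∈ Finset.Icc L K, b i ≠ 0)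
    (x₀ : ℝ) (hx₀ : 0 < x₀)
    (hroot : A * (2 : ℝ) ^ K * x₀ -
        ∑ j ∈ Finset.range ((K - L).toNat + 1),
          b (K - (j : ℤ)) * 2 ^ j * x₀ / ((1 + x₀) ^ (2 ^ j) - 1) = 0) :
    Real.exp (Real.log (1 + (∑ i ∈ Finset.Icc L K, b i * (2 : ℝ) ^ (K - i)) / (A * (2 : ℝ) ^ K)) *
        ((∑ i ∈ Finset.Icc L K, b i) / (∑ i ∈ Finset.Icc L K, b i * (2 : ℝ) ^ (K - i)))) - 1
      ≤ x₀ := by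
  obtain ⟨i₀, hi₀, hbi₀⟩ := hne
  have hLK : L ≤ K := (mem_Icc.1 hi₀).1.trans (mem_Icc.1 hi₀).2
  have hS : 0 < ∑ j ∈ range ((K - L).toNat + 1), b (K - j) := by
    rw [← sum_Icc_eq_sum_range_sub hLK]
    exact sum_pos' (fun i _ ↦ hb i) ⟨i₀, hi₀, (hb i₀).lt_of_ne' hbi₀⟩
  have hP : ∑ i ∈ Icc L K, b i * (2 : ℝ) ^ (K - i) =
      ∑ j ∈ range ((K - L).toNat + 1), b (K - j) * ((2 ^ j : ℕ) : ℝ) := by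
    rw [sum_Icc_eq_sum_range_sub hLK]
    simp
  rw [hP, sum_Icc_eq_sum_range_sub hLK, sub_le_iff_le_add',
    ← exp_log (by linarith : 0 < 1 + x₀), exp_le_exp]
  exact log_one_add_div_mul_div_le_log_one_add (fun j _ ↦ hb _) hS (fun j _ ↦ by positivity) hx₀
    (by push_cast; linarith)

theorem ml_root_lower_bound (A : ℝ) (hA : 0 < A) (L K : ℤ) (hLK : L ≤ K)
    (b : ℤ → ℝ) (hb : ∀ i, 0 ≤ b i)
    (hne : ∃ i ∈ Finset.Icc L K, b i ≠ 0)
    (x₀ : ℝ) (hx₀ : 0 < x₀)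
    (hroot : A * (2 : ℝ) ^ K * x₀ -
        ∑ j ∈ Finset.range ((K - L).toNat + 1),
          b (K - (j : ℤ)) * 2 ^ j * x₀ / ((1 + x₀) ^ (2 ^ j) - 1) = 0) :
    Real.exp (Real.log (1 + (∑ i ∈ Finset.Icc L K, b i * (2 : ℝ) ^ (K - i)) / (A * (2 : ℝ) ^ K)) *
        ((∑ i ∈ Finset.Icc L K, b i) / (∑ i ∈ Finset.Icc L K, b i * (2 : ℝ) ^ (K - i)))) - 1
      ≤ x₀ :=
  ml_root_lower_bound_general A L K b hb hne x₀ hx₀ hroot
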